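/- Let n be a natural number and let X, Y be nonzero n×n complex matrices. If Re Tr(|Y*||X*|) = 0 or Re Tr(|Y||X|) = 0, then Re Tr(Y*X) = 0. -/

import Mathlib

/-!
Write positive semidefinite `A, B` as `A = SᴴS`, `B = TᴴT`; then `Tr(AB) = Tr((TSᴴ)ᴴ(TSᴴ))`, so
`Re Tr(AB) = 0` forces `TSᴴ = 0` and hence `AB = 0`. Applied to `|Y|, |X|` this gives
`YᴴY XᴴX = |Y||Y||X||X| = 0`, which cancels down to `YXᴴ = 0`, and then `Tr(YᴴX) = Tr(XYᴴ) = 0`.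
The condition on `|Y*||X*|` is the same argument for `Xᴴ, Yᴴ`.
-/

open Matrix
open scoped ComplexOrder

/-- Hilbert–Schmidt (Frobenius) norm: ‖X‖₂ = √(Re Tr(XᴴX)). -/
noncomputable def hsNorm {n : ℕ} (X : Matrix (Fin n) (Fin n) ℂ) : ℝ :=
  Real.sqrt ((Matrix.trace (Xᴴ * X)).re)

/-- Angle Θ(X,Y) = arccos(Re Tr(YᴴX) / (‖X‖₂‖Y‖₂)). -/
noncomputable def theta {n : ℕ} (X Y : Matrix (Fin n) (Fin n) ℂ) : ℝ :=
  Real.arccos ((Matrix.trace (Yᴴ * X)).re / (hsNorm X * hsNorm Y))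

/-- |X| : the positive semidefinite square root of XᴴX. -/
noncomputable def matAbs {n : ℕ} (X : Matrix (Fin n) (Fin n) ℂ) : Matrix (Fin n) (Fin n) ℂ :=
  (Matrix.posSemidef_conjTranspose_mul_self X).1.eigenvectorUnitary.1 *
    Matrix.diagonal ((↑) ∘ Real.sqrt ∘ (Matrix.posSemidef_conjTranspose_mul_self X).1.eigenvalues) *
    (star (Matrix.posSemidef_conjTranspose_mul_self X).1.eigenvectorUnitary : Matrix (Fin n) (Fin n) ℂ)

open scoped MatrixOrder

namespace Matrix

variable {𝕜 m n : Type*} [RCLike 𝕜] [Fintype m] [Fintype n]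

theorem re_trace_conjTranspose_mul_self_eq_zero_iff {M : Matrix m n 𝕜} :
    RCLike.re (Mᴴ * M).trace = 0 ↔ M = 0 := by
  have him := (RCLike.nonneg_iff.mp (posSemidef_conjTranspose_mul_self M).trace_nonneg).2
  rw [← trace_conjTranspose_mul_self_eq_zero_iff]
  exact ⟨fun h ↦ RCLike.ext (by simp [h]) (by simp [him]), fun h ↦ by simp [h]⟩

theorem PosSemidef.mul_eq_zero_of_re_trace_mul_eq_zero {A B : Matrix n n 𝕜}
    (hA : A.PosSemidef) (hB : B.PosSemidef) (h : RCLike.re (A * B).trace = 0) : A * B = 0 := by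
  classical
  obtain ⟨S, rfl⟩ := CStarAlgebra.nonneg_iff_eq_star_mul_self.mp hA.nonneg
  obtain ⟨T, rfl⟩ := CStarAlgebra.nonneg_iff_eq_star_mul_self.mp hB.nonneg
  simp only [star_eq_conjTranspose] at h ⊢
  have hTS : T * Sᴴ = 0 := by
    rw [← re_trace_conjTranspose_mul_self_eq_zero_iff, conjTranspose_mul,
      conjTranspose_conjTranspose]
    rwa [mul_assoc Sᴴ, trace_mul_comm Sᴴ, ← mul_assoc, mul_assoc _ T] at h
  have hST : S * Tᴴ = 0 := by
    rwa [← conjTranspose_eq_zero, conjTranspose_mul, conjTranspose_conjTranspose]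
  rw [mul_assoc, ← mul_assoc S, hST, zero_mul, mul_zero]

theorem mul_conjTranspose_eq_zero_of_re_trace_abs_mul_abs_eq_zero [DecidableEq n]
    {X Y : Matrix n n 𝕜} (h : RCLike.re (CFC.abs Y * CFC.abs X).trace = 0) : Y * Xᴴ = 0 := by
  have habs : CFC.abs Y * CFC.abs X = 0 :=
    (CFC.abs_nonneg Y).posSemidef.mul_eq_zero_of_re_trace_mul_eq_zero
      (CFC.abs_nonneg X).posSemidef h
  have hgram : Yᴴ * Y * (Xᴴ * X) = 0 := by
    rw [← star_eq_conjTranspose, ← star_eq_conjTranspose, ← CFC.abs_mul_abs, ← CFC.abs_mul_abs,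
      mul_assoc (CFC.abs Y), ← mul_assoc (CFC.abs Y) (CFC.abs X), habs, zero_mul, mul_zero]
  rwa [conjTranspose_mul_self_mul_eq_zero, mul_conjTranspose_mul_self_eq_zero] at hgram

end Matrix

theorem matAbs_eq_cfcAbs {n : ℕ} (X : Matrix (Fin n) (Fin n) ℂ) : matAbs X = CFC.abs X := by
  have hX := Matrix.posSemidef_conjTranspose_mul_self X
  rw [CFC.abs, Matrix.star_eq_conjTranspose, CFC.sqrt_eq_real_sqrt _ hX.nonneg, cfcₙ_eq_cfc,
    hX.isHermitian.cfc_eq]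
  rfl

theorem stmt_11_general {n : ℕ} (X Y : Matrix (Fin n) (Fin n) ℂ)
    (h : (Matrix.trace (matAbs Yᴴ * matAbs Xᴴ)).re = 0 ∨
         (Matrix.trace (matAbs Y * matAbs X)).re = 0) :
    (Matrix.trace (Yᴴ * X)).re = 0 := by
  simp only [matAbs_eq_cfcAbs] at h
  rcases h with h | h
  · have hYX : Yᴴ * X = 0 := by
      simpa using mul_conjTranspose_eq_zero_of_re_trace_abs_mul_abs_eq_zero (X := Xᴴ) (Y := Yᴴ) h
    simp [hYX]
  · have hXY : X * Yᴴ = 0 := by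
      rw [← conjTranspose_eq_zero, conjTranspose_mul, conjTranspose_conjTranspose]
      exact mul_conjTranspose_eq_zero_of_re_trace_abs_mul_abs_eq_zero (X := X) (Y := Y) h
    rw [trace_mul_comm, hXY, trace_zero, Complex.zero_re]

theorem stmt_11 {n : ℕ} (X Y : Matrix (Fin n) (Fin n) ℂ) (hX : X ≠ 0) (hY : Y ≠ 0)
    (h : (Matrix.trace (matAbs Yᴴ * matAbs Xᴴ)).re = 0 ∨
         (Matrix.trace (matAbs Y * matAbs X)).re = 0) :
    (Matrix.trace (Yᴴ * X)).re = 0 :=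
  stmt_11_general X Y h
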